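/- Let B be a unital algebra with an H-measuring β: H ⊗ B → B (written h ▷ b) satisfying h ▷ (ab) = Σ(h₍₁₎ ▷ a)(h₍₂₎ ▷ b), h ▷ 1_B = ε(h)1_B, 1_H ▷ a = a, twisted by u: H ⊗ H → B satisfying Σ(h₍₁₎ ▷ (k₍₁₎ ▷ a)) u(h₍₂₎,k₍₂₎) = Σ u(h₍₁₎,k₍₁₎)(h₍₂₎k₍₂₎ ▷ a). Let 1_A be a central idempotent of B and A = 1_A B. Define h·a = 1_A(h ▷ a) for a ∈ A and ω(h,k) = Σ(h₍₁₎·1_A) u(h₍₂₎,k₍₁₎)(h₍₃₎k₍₂₎·1_A). Then (A, ·, ω) is a twisted partial H-module algebra. -/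

import Mathlib

/-!
Everything happens in convolution algebras `Hom(H, B)` and `Hom(H ⊗ H, B)`. The induced action
`h ↦ h · x = e (h ▷ x)` is the convolution element `partialAct β e x`; because `e` is a central
idempotent, the measuring axiom becomes `partialAct x ⋆ partialAct y = partialAct (x y)`. The
cocycle is `ω = (partialAct e ∘ fst) ⋆ u ⋆ (partialAct e ∘ mul)`, and precomposition with the
coalgebra maps `fst, mul : H ⊗ H → H` is multiplicative. Associativity of convolution
(coassociativity) then reduces both cocycle identities to the twist condition
`(h ▷ l ▷ a) ⋆ u = u ⋆ (hl ▷ a)` together with `partialAct e ⋆ partialAct a = partialAct a`.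
-/

open TensorProduct

noncomputable section

open Coalgebra WithConv

namespace LinearMap

variable {k C D B ι κ : Type*} [CommSemiring k] [AddCommMonoid C] [Module k C] [Coalgebra k C]
  [Semiring B] [Algebra k B]

lemma convMul_apply_of_comul_eq (f g : WithConv (C →ₗ[k] B)) {c : C} {s : Finset ι}
    {c₁ c₂ : ι → C} (hc : comul (R := k) c = ∑ i ∈ s, c₁ i ⊗ₜ c₂ i) :
    (f * g) c = ∑ i ∈ s, f (c₁ i) * g (c₂ i) :=
  (Coalgebra.Repr.mk s c₁ c₂ hc.symm).convMul_apply f g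

lemma convMul_smul_of_commute {e : B} (he : ∀ b, Commute e b) (f g : WithConv (C →ₗ[k] B)) :
    f * e • g = e • (f * g) := by
  ext c
  simp only [(ℛ k c).convMul_apply, ofConv_smul, smul_apply, smul_eq_mul, ← mul_assoc,
    (he _).eq, Finset.sum_mul]

variable [AddCommMonoid D] [Module k D] [Coalgebra k D]

lemma convMul_apply_tmul_of_comul_eq (f g : WithConv (C ⊗[k] D →ₗ[k] B)) {c : C} {d : D}
    {s : Finset ι} {t : Finset κ} {c₁ c₂ : ι → C} {d₁ d₂ : κ → D}
    (hc : comul (R := k) c = ∑ i ∈ s, c₁ i ⊗ₜ c₂ i)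
    (hd : comul (R := k) d = ∑ j ∈ t, d₁ j ⊗ₜ d₂ j) :
    (f * g) (c ⊗ₜ d) = ∑ i ∈ s, ∑ j ∈ t, f (c₁ i ⊗ₜ d₁ j) * g (c₂ i ⊗ₜ d₂ j) := by
  simp [hc, hd, sum_tmul, tmul_sum, Finset.sum_comm (s := t)]

variable (B) in
def convPrecomp (φ : C →ₗc[k] D) : WithConv (D →ₗ[k] B) →ₙ* WithConv (C →ₗ[k] B) where
  toFun f := toConv (f.ofConv ∘ₗ φ)
  map_mul' f g := congrArg toConv (convMul_comp_coalgHom_distrib f g φ)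

@[simp] lemma convPrecomp_apply (φ : C →ₗc[k] D) (f : WithConv (D →ₗ[k] B)) (c : C) :
    convPrecomp B φ f c = f (φ c) := rfl

variable (k C D) in
def fstCoalgHom : C ⊗[k] D →ₗc[k] C :=
  (Coalgebra.TensorProduct.rid k k C).toCoalgHom.comp
    (Coalgebra.TensorProduct.map (CoalgHom.id k C) (counitCoalgHom k D))

@[simp] lemma fstCoalgHom_tmul (c : C) (d : D) :
    fstCoalgHom k C D (c ⊗ₜ d) = counit (R := k) d • c := rfl

lemma fst_convMul_apply_tmul (g : WithConv (C →ₗ[k] B)) (F : WithConv (C ⊗[k] D →ₗ[k] B))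
    (c : C) (d : D) :
    (convPrecomp B (fstCoalgHom k C D) g * F) (c ⊗ₜ d) =
      (g * toConv (F.ofConv ∘ₗ (TensorProduct.mk k C D).flip d)) c := by
  rw [convMul_apply_tmul_of_comul_eq _ _ (ℛ k c).eq.symm (ℛ k d).eq.symm,
    (ℛ k c).convMul_apply]
  refine Finset.sum_congr rfl fun i _ => ?_
  calc _ = ∑ j ∈ (ℛ k d).index, g ((ℛ k c).left i) *
        F ((ℛ k c).right i ⊗ₜ (counit (R := k) ((ℛ k d).left j) • (ℛ k d).right j)) :=
        Finset.sum_congr rfl fun j _ => by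
          rw [convPrecomp_apply, fstCoalgHom_tmul, map_smul, tmul_smul, map_smul,
            smul_mul_assoc, mul_smul_comm]
    _ = _ := by rw [← Finset.mul_sum, ← map_sum, ← tmul_sum, sum_counit_smul]; rfl

lemma convMul_fst_apply_tmul (g : WithConv (C →ₗ[k] B)) (F : WithConv (C ⊗[k] D →ₗ[k] B))
    (c : C) (d : D) :
    (F * convPrecomp B (fstCoalgHom k C D) g) (c ⊗ₜ d) =
      (toConv (F.ofConv ∘ₗ (TensorProduct.mk k C D).flip d) * g) c := by
  have hd : ∑ j ∈ (ℛ k d).index, counit (R := k) ((ℛ k d).right j) • (ℛ k d).left j = d := by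
    simpa only [map_sum, rid_tmul, one_smul] using
      congr(TensorProduct.rid k D $(sum_tmul_counit_eq (ℛ k d)))
  rw [convMul_apply_tmul_of_comul_eq _ _ (ℛ k c).eq.symm (ℛ k d).eq.symm,
    (ℛ k c).convMul_apply]
  refine Finset.sum_congr rfl fun i _ => ?_
  calc _ = ∑ j ∈ (ℛ k d).index,
        F ((ℛ k c).left i ⊗ₜ (counit (R := k) ((ℛ k d).right j) • (ℛ k d).left j)) *
          g ((ℛ k c).right i) :=
        Finset.sum_congr rfl fun j _ => by
          rw [convPrecomp_apply, fstCoalgHom_tmul, map_smul, tmul_smul, map_smul,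
            mul_smul_comm, smul_mul_assoc]
    _ = _ := by rw [← Finset.sum_mul, ← map_sum, ← tmul_sum, hd]; rfl

end LinearMap

section InducedPartialAction

open LinearMap

variable {k B : Type*} {H : Type} [CommSemiring k] [Semiring H] [Bialgebra k H]
  [Semiring B] [Algebra k B] {β : H →ₗ[k] B →ₗ[k] B} {e : B}

variable (β e) in
def partialAct (x : B) : WithConv (H →ₗ[k] B) := e • toConv (β.flip x)

variable (β e) in
def inducedCocycle (u : H →ₗ[k] H →ₗ[k] B) : WithConv (H ⊗[k] H →ₗ[k] B) :=
  convPrecomp B (fstCoalgHom k H H) (partialAct β e e) * toConv (lift u) *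
    convPrecomp B (Bialgebra.mulCoalgHom k H) (partialAct β e e)

lemma flip_convMul_flip_of_measuring
    (hβ_mul : ∀ (h : H) (a b : B) (ι : Type) (s : Finset ι) (h1 h2 : ι → H),
      comul (R := k) h = ∑ i ∈ s, h1 i ⊗ₜ[k] h2 i →
      β h (a * b) = ∑ i ∈ s, β (h1 i) a * β (h2 i) b) (a b : B) :
    toConv (β.flip a) * toConv (β.flip b) = toConv (β.flip (a * b)) := by
  ext h
  exact ((ℛ k h).convMul_apply _ _).trans (hβ_mul h a b _ _ _ _ (ℛ k h).eq.symm).symm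

lemma lift_compl₂_convMul_lift_of_twist {u : H →ₗ[k] H →ₗ[k] B}
    (hβ_twist : ∀ (h l : H) (a : B) (ι κ : Type) (s : Finset ι) (t : Finset κ)
      (h1 h2 : ι → H) (l1 l2 : κ → H),
      comul (R := k) h = ∑ i ∈ s, h1 i ⊗ₜ[k] h2 i →
      comul (R := k) l = ∑ j ∈ t, l1 j ⊗ₜ[k] l2 j →
      ∑ i ∈ s, ∑ j ∈ t, β (h1 i) (β (l1 j) a) * u (h2 i) (l2 j) =
        ∑ i ∈ s, ∑ j ∈ t, u (h1 i) (l1 j) * β (h2 i * l2 j) a) (a : B) :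
    toConv (lift (β.compl₂ (β.flip a))) * toConv (lift u) =
      toConv (lift u) * convPrecomp B (Bialgebra.mulCoalgHom k H) (toConv (β.flip a)) := by
  refine WithConv.ext (TensorProduct.ext' fun h l => ?_)
  have hh := (ℛ k h).eq.symm
  have hl := (ℛ k l).eq.symm
  rw [convMul_apply_tmul_of_comul_eq _ _ hh hl, convMul_apply_tmul_of_comul_eq _ _ hh hl]
  exact hβ_twist h l a _ _ _ _ _ _ _ _ hh hl

lemma lift_eq_inducedCocycle {u W : H →ₗ[k] H →ₗ[k] B}
    (hW : ∀ (h l : H) (ι ι' κ : Type) (s : Finset ι) (s' : ι → Finset ι')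
      (t : Finset κ) (h1 h2 : ι → H) (h21 h22 : ι → ι' → H) (l1 l2 : κ → H),
      comul (R := k) h = ∑ i ∈ s, h1 i ⊗ₜ[k] h2 i →
      (∀ i ∈ s, comul (R := k) (h2 i) = ∑ j ∈ s' i, h21 i j ⊗ₜ[k] h22 i j) →
      comul (R := k) l = ∑ p ∈ t, l1 p ⊗ₜ[k] l2 p →
      W h l = ∑ i ∈ s, ∑ j ∈ s' i, ∑ p ∈ t,
        (e * β (h1 i) e) * u (h21 i j) (l1 p) * (e * β (h22 i j * l2 p) e)) :
    toConv (lift W) = inducedCocycle β e u := by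
  refine WithConv.ext (TensorProduct.ext' fun h l => ?_)
  rw [inducedCocycle, mul_assoc, fst_convMul_apply_tmul, (ℛ k h).convMul_apply, ofConv_toConv,
    lift.tmul, hW h l _ _ _ _ (fun r => (ℛ k ((ℛ k h).right r)).index) _ _ _
      (fun r => (ℛ k ((ℛ k h).right r)).left) (fun r => (ℛ k ((ℛ k h).right r)).right) _ _
      (ℛ k h).eq.symm (fun r _ => (ℛ k ((ℛ k h).right r)).eq.symm) (ℛ k l).eq.symm]
  refine Finset.sum_congr rfl fun r _ => ?_
  rw [coe_comp, Function.comp_apply, flip_apply, mk_apply,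
    convMul_apply_tmul_of_comul_eq _ _ (ℛ k ((ℛ k h).right r)).eq.symm (ℛ k l).eq.symm]
  simp only [Finset.mul_sum]
  exact Finset.sum_congr rfl fun _ _ => Finset.sum_congr rfl fun _ _ => mul_assoc _ _ _

section CentralIdempotent

variable (hβ : ∀ a b, toConv (β.flip a) * toConv (β.flip b) = toConv (β.flip (a * b)))
  (he : ∀ b, Commute e b) (he_idem : IsIdempotentElem e)
include hβ

lemma partialAct_convMul_flip (x y : B) :
    partialAct β e x * toConv (β.flip y) = partialAct β e (x * y) := by
  rw [partialAct, smul_mul_assoc, hβ, partialAct]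

include he

lemma flip_convMul_partialAct (x y : B) :
    toConv (β.flip x) * partialAct β e y = partialAct β e (x * y) := by
  rw [partialAct, convMul_smul_of_commute he, hβ, partialAct]

include he_idem

lemma partialAct_convMul_partialAct (x y : B) :
    partialAct β e x * partialAct β e y = partialAct β e (x * y) := by
  rw [partialAct, smul_mul_assoc, flip_convMul_partialAct hβ he, partialAct, smul_smul,
    he_idem.eq]

lemma lift_compl₂_convMul_fst_partialAct (a : B) :
    toConv (lift ((e • β).compl₂ (e • β.flip a))) *
        convPrecomp B (fstCoalgHom k H H) (partialAct β e e) =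
      convPrecomp B (fstCoalgHom k H H) (partialAct β e e) *
        toConv (lift (β.compl₂ (β.flip a))) := by
  refine WithConv.ext (TensorProduct.ext' fun h l => ?_)
  rw [convMul_fst_apply_tmul, fst_convMul_apply_tmul]
  have hP : toConv ((lift ((e • β).compl₂ (e • β.flip a))) ∘ₗ (TensorProduct.mk k H H).flip l) =
      partialAct β e (e * β l a) := by
    ext; rfl
  have hQ : toConv ((lift (β.compl₂ (β.flip a))) ∘ₗ (TensorProduct.mk k H H).flip l) =
      toConv (β.flip (β l a)) := by
    ext; rfl
  rw [ofConv_toConv, hP, ofConv_toConv, hQ, partialAct_convMul_partialAct hβ he he_idem,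
    partialAct_convMul_flip hβ, mul_assoc, ← (he _).eq, ← mul_assoc, he_idem.eq]

lemma inducedCocycle_convMul_mul_partialAct (u : H →ₗ[k] H →ₗ[k] B) :
    inducedCocycle β e u * convPrecomp B (Bialgebra.mulCoalgHom k H) (partialAct β e e) =
      inducedCocycle β e u := by
  rw [inducedCocycle, mul_assoc _ (convPrecomp _ _ _), ← map_mul,
    partialAct_convMul_partialAct hβ he he_idem, he_idem.eq]

lemma lift_compl₂_convMul_inducedCocycle {u : H →ₗ[k] H →ₗ[k] B}
    (htwist : ∀ a, toConv (lift (β.compl₂ (β.flip a))) * toConv (lift u) =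
      toConv (lift u) * convPrecomp B (Bialgebra.mulCoalgHom k H) (toConv (β.flip a)))
    {a : B} (ha : e * a = a) :
    toConv (lift ((e • β).compl₂ (e • β.flip a))) * inducedCocycle β e u =
      inducedCocycle β e u * convPrecomp B (Bialgebra.mulCoalgHom k H) (partialAct β e a) := by
  set m := convPrecomp B (Bialgebra.mulCoalgHom k H)
  set φ := convPrecomp B (fstCoalgHom k H H) (partialAct β e e)
  have hae : a * e = a := (he a).eq ▸ ha
  calc _ = φ * toConv (lift (β.compl₂ (β.flip a))) * toConv (lift u) * m (partialAct β e e) := by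
        rw [inducedCocycle, ← mul_assoc, ← mul_assoc,
          lift_compl₂_convMul_fst_partialAct hβ he he_idem]
    _ = φ * toConv (lift u) * m (toConv (β.flip a) * partialAct β e e) := by
        rw [mul_assoc φ, htwist, map_mul, ← mul_assoc, ← mul_assoc]
    _ = φ * toConv (lift u) * m (partialAct β e e * partialAct β e a) := by
        rw [flip_convMul_partialAct hβ he, partialAct_convMul_partialAct hβ he he_idem, hae, ha]
    _ = _ := by rw [map_mul, ← mul_assoc, inducedCocycle]

end CentralIdempotent

end InducedPartialAction

theorem induced_twistedPartialAction
    {k H B : Type} [CommRing k] [Ring H] [HopfAlgebra k H]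
    [Ring B] [Algebra k B]
    (β : H →ₗ[k] B →ₗ[k] B) (u : H →ₗ[k] H →ₗ[k] B) (e : B)
    (hβ_one : ∀ b : B, β 1 b = b)
    (hβ_mul : ∀ (h : H) (a b : B) (ι : Type) (s : Finset ι) (h1 h2 : ι → H),
      Coalgebra.comul (R := k) h = ∑ i ∈ s, h1 i ⊗ₜ[k] h2 i →
      β h (a * b) = ∑ i ∈ s, β (h1 i) a * β (h2 i) b)
    (hβ_twist : ∀ (h l : H) (a : B) (ι κ : Type) (s : Finset ι) (t : Finset κ)
      (h1 h2 : ι → H) (l1 l2 : κ → H),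
      Coalgebra.comul (R := k) h = ∑ i ∈ s, h1 i ⊗ₜ[k] h2 i →
      Coalgebra.comul (R := k) l = ∑ j ∈ t, l1 j ⊗ₜ[k] l2 j →
      ∑ i ∈ s, ∑ j ∈ t, β (h1 i) (β (l1 j) a) * u (h2 i) (l2 j) =
        ∑ i ∈ s, ∑ j ∈ t, u (h1 i) (l1 j) * β (h2 i * l2 j) a)
    (he_central : ∀ b : B, e * b = b * e) (he_idem : e * e = e)
    (W : H →ₗ[k] H →ₗ[k] B)
    (hW : ∀ (h l : H) (ι ι' κ : Type) (s : Finset ι) (s' : ι → Finset ι')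
      (t : Finset κ) (h1 h2 : ι → H) (h21 h22 : ι → ι' → H) (l1 l2 : κ → H),
      Coalgebra.comul (R := k) h = ∑ i ∈ s, h1 i ⊗ₜ[k] h2 i →
      (∀ i ∈ s, Coalgebra.comul (R := k) (h2 i) =
        ∑ j ∈ s' i, h21 i j ⊗ₜ[k] h22 i j) →
      Coalgebra.comul (R := k) l = ∑ p ∈ t, l1 p ⊗ₜ[k] l2 p →
      W h l = ∑ i ∈ s, ∑ j ∈ s' i, ∑ p ∈ t,
        (e * β (h1 i) e) * u (h21 i j) (l1 p) *
          (e * β (h22 i j * l2 p) e)) :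
    -- `(A, ·, ω)` is a twisted partial `H`-module algebra, where `A = eB`
    (∀ a : B, e * a = a → e * β 1 a = a) ∧
    (∀ (h : H) (a b : B), e * a = a → e * b = b →
      ∀ (ι : Type) (s : Finset ι) (h1 h2 : ι → H),
      Coalgebra.comul (R := k) h = ∑ i ∈ s, h1 i ⊗ₜ[k] h2 i →
      e * β h (a * b) = ∑ i ∈ s, (e * β (h1 i) a) * (e * β (h2 i) b)) ∧
    (∀ (h l : H) (a : B), e * a = a →
      ∀ (ι κ : Type) (s : Finset ι) (t : Finset κ)
        (h1 h2 : ι → H) (l1 l2 : κ → H),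
      Coalgebra.comul (R := k) h = ∑ i ∈ s, h1 i ⊗ₜ[k] h2 i →
      Coalgebra.comul (R := k) l = ∑ j ∈ t, l1 j ⊗ₜ[k] l2 j →
      ∑ i ∈ s, ∑ j ∈ t,
          (e * β (h1 i) (e * β (l1 j) a)) * W (h2 i) (l2 j) =
        ∑ i ∈ s, ∑ j ∈ t, W (h1 i) (l1 j) * (e * β (h2 i * l2 j) a)) ∧
    (∀ (h l : H) (ι κ : Type) (s : Finset ι) (t : Finset κ)
        (h1 h2 : ι → H) (l1 l2 : κ → H),
      Coalgebra.comul (R := k) h = ∑ i ∈ s, h1 i ⊗ₜ[k] h2 i →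
      Coalgebra.comul (R := k) l = ∑ j ∈ t, l1 j ⊗ₜ[k] l2 j →
      W h l = ∑ i ∈ s, ∑ j ∈ t,
        W (h1 i) (l1 j) * (e * β (h2 i * l2 j) e)) := by
  have hβ := flip_convMul_flip_of_measuring hβ_mul
  have he : ∀ b, Commute e b := he_central
  have hW' := lift_eq_inducedCocycle hW
  refine ⟨fun a ha => by rw [hβ_one, ha], ?_, ?_, ?_⟩
  · intro h a b _ _ ι s h1 h2 hs
    have := LinearMap.convMul_apply_of_comul_eq (partialAct β e a) (partialAct β e b) hs
    rw [partialAct_convMul_partialAct hβ he he_idem] at this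
    exact this
  · intro h l a ha ι κ s t h1 h2 l1 l2 hs ht
    have := congr($(lift_compl₂_convMul_inducedCocycle hβ he he_idem
      (lift_compl₂_convMul_lift_of_twist hβ_twist) ha) (h ⊗ₜ l))
    rw [← hW', LinearMap.convMul_apply_tmul_of_comul_eq _ _ hs ht,
      LinearMap.convMul_apply_tmul_of_comul_eq _ _ hs ht] at this
    exact this
  · intro h l ι κ s t h1 h2 l1 l2 hs ht
    have := congr($(inducedCocycle_convMul_mul_partialAct hβ he he_idem u) (h ⊗ₜ l))
    rw [← hW', LinearMap.convMul_apply_tmul_of_comul_eq _ _ hs ht] at this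
    exact this.symm
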